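/- Let (G,N) be a pair of finite groups which is nilpotent of class t (i.e. [N,_tG] = 1 and [N,_{t−1}G] ≠ 1), with t ≥ c+1. Then |[N,_{t−1}G]| · |M^{(c)}(G,N)| divides |M^{(c)}(G/[N,_{t−1}G], N/[N,_{t−1}G])| · |⊗^{c+1}([N,_{t−1}G], G/Z_{t−1}(N,G))|. -/

import Mathlib

open Subgroup

/-- `itComm X Y c` is the `c`-fold iterated commutator subgroup
`[X,_c Y] = ⁅…⁅⁅X,Y⁆,Y⁆,…,Y⁆` (with `c` copies of `Y`); `itComm X Y 0 = X`. -/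
def itComm {P : Type*} [Group P] (X Y : Subgroup P) : ℕ → Subgroup P
  | 0 => X
  | c + 1 => ⁅itComm X Y c, Y⁆

instance itComm_normal {P : Type*} [Group P] (X Y : Subgroup P) [hX : X.Normal] [hY : Y.Normal]
    (c : ℕ) : (itComm X Y c).Normal := by
  induction c with
  | zero => exact hX
  | succ c ih => exact Subgroup.commutator_normal _ _

/-- The abelianization of a group, written additively. -/
abbrev AbOf (A : Type) [Group A] : Type := Additive (Abelianization A)

/-- Iterated tensor product `M ⊗ B ⊗ ⋯ ⊗ B` (with `c` factors `B`) of `ℤ`-modules. -/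
noncomputable def iterTensor (M B : ModuleCat ℤ) : ℕ → ModuleCat ℤ
  | 0 => M
  | c + 1 => ModuleCat.of ℤ (TensorProduct ℤ (iterTensor M B c) B)

/-- `⊗^{c+1}(A, B) = A^{ab} ⊗_ℤ B^{ab} ⊗_ℤ ⋯ ⊗_ℤ B^{ab}` with `c` factors `B^{ab}`. -/
noncomputable def tensorPair (A B : Type) [Group A] [Group B] (c : ℕ) : ModuleCat ℤ :=
  iterTensor (ModuleCat.of ℤ (AbOf A)) (ModuleCat.of ℤ (AbOf B)) c

/-- `M^{(c)}(G,N) = (R ∩ [S,_c F]) / [R,_c F]`, where `R = ker π` and `S = π⁻¹(N)`,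
relative to the free presentation `π : F ↠ G`. -/
def McPair {F G : Type} [Group F] [Group G] (π : F →* G) (N : Subgroup G) (c : ℕ) : Type :=
  (π.ker ⊓ itComm (N.comap π) ⊤ c : Subgroup F) ⧸
    (itComm π.ker ⊤ c).subgroupOf (π.ker ⊓ itComm (N.comap π) ⊤ c)

noncomputable instance {F G : Type} [Group F] [Group G] (π : F →* G) (N : Subgroup G) (c : ℕ) :
    Group (McPair π N c) :=
  inferInstanceAs (Group ((π.ker ⊓ itComm (N.comap π) ⊤ c : Subgroup F) ⧸
    (itComm π.ker ⊤ c).subgroupOf (π.ker ⊓ itComm (N.comap π) ⊤ c)))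

/-- `M^{(c)}(G/K, N/K) = (T ∩ [S,_c F]) / [T,_c F]`, where `T = π⁻¹(K)` and `S = π⁻¹(N)`,
relative to the free presentation `π : F ↠ G`. -/
def McPairQuot {F G : Type} [Group F] [Group G] (π : F →* G) (N K : Subgroup G) (c : ℕ) :
    Type :=
  (K.comap π ⊓ itComm (N.comap π) ⊤ c : Subgroup F) ⧸
    (itComm (K.comap π) ⊤ c).subgroupOf (K.comap π ⊓ itComm (N.comap π) ⊤ c)

noncomputable instance {F G : Type} [Group F] [Group G] (π : F →* G) (N K : Subgroup G)
    [K.Normal] (c : ℕ) : Group (McPairQuot π N K c) :=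
  inferInstanceAs (Group ((K.comap π ⊓ itComm (N.comap π) ⊤ c : Subgroup F) ⧸
    (itComm (K.comap π) ⊤ c).subgroupOf (K.comap π ⊓ itComm (N.comap π) ⊤ c)))

/-- `Z_j(N,G) = {n ∈ N : [n,g_1,…,g_j] = 1 for all g_1,…,g_j ∈ G}`, the `j`-th relative
centre of the pair `(G,N)`; it equals `N ∩ Z_j(G)` where `Z_j(G)` is the upper central
series of `G`. -/
def relCenter {G : Type} [Group G] (N : Subgroup G) (j : ℕ) : Subgroup G :=
  N ⊓ Subgroup.upperCentralSeries G j

instance relCenter_normal {G : Type} [Group G] (N : Subgroup G) [N.Normal] (j : ℕ) :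
    (relCenter N j).Normal :=
  inferInstanceAs ((N ⊓ Subgroup.upperCentralSeries G j).Normal)

/-!
Put `R = ker π`, `S = π⁻¹(N)`, `L = [S,_c F]`, `K = [N,_{t-1} G]` and `T = π⁻¹(K)`. As `K` is
central, `[T, F] ≤ R`; hence `[R,_c F] ≤ [T,_c F] ≤ R ∩ L ≤ T ∩ L`, and
`(T ∩ L)/(R ∩ L) ≅ π(T ∩ L) = K` because `K ≤ [N,_c G] = π(L)`. Multiplicativity of the
index along this chain gives `|K| · |M^{(c)}(G,N)| = |M^{(c)}(G/K,N/K)| · |[T,_c F] : [R,_c F]|`.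

The quotient `[T,_j F]/[R,_j F]` is abelian, and `x ⊗ f ↦ [x, f]` defines a bilinear map from
`[T,_j F]/[R,_j F] ⊗ (G/Z)^{ab}`, `Z = Z_{t-1}(N,G)`, onto `[T,_{j+1} F]/[R,_{j+1} F]`; by
induction `K^{ab} ⊗ (G/Z)^{ab} ⊗ ⋯ ⊗ (G/Z)^{ab}` maps onto `[T,_c F]/[R,_c F]`. That the map
descends to `(G/Z)^{ab}` is the estimate `[[T,_j F], F' π⁻¹(Z)] ≤ [R,_{j+1} F]`, which comes from
the three subgroup lemma applied along `… ≤ [R,_2 F] ≤ [R,_1 F] ≤ R = π⁻¹(Z_0) ≤ π⁻¹(Z_1) ≤ …`.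
-/

open scoped commutatorElement

namespace Subgroup

variable {P : Type*} [Group P]

theorem commutator_commutator_le_of_rotate {M H K L : Subgroup P} [M.Normal]
    (h1 : ⁅⁅H, K⁆, L⁆ ≤ M) (h2 : ⁅⁅K, L⁆, H⁆ ≤ M) : ⁅⁅L, H⁆, K⁆ ≤ M := by
  have key : ∀ A B C : Subgroup P, ⁅⁅A, B⁆, C⁆ ≤ M ↔
      ⁅⁅A.map (QuotientGroup.mk' M), B.map (QuotientGroup.mk' M)⁆,
        C.map (QuotientGroup.mk' M)⁆ = ⊥ := fun A B C => by
    rw [← map_commutator, ← map_commutator, map_eq_bot_iff, QuotientGroup.ker_mk']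
  rw [key] at h1 h2 ⊢
  exact commutator_commutator_eq_bot_of_rotate h1 h2

theorem sup_commutator_le {M H K L : Subgroup P} [M.Normal]
    (hH : ⁅H, L⁆ ≤ M) (hK : ⁅K, L⁆ ≤ M) : ⁅H ⊔ K, L⁆ ≤ M := by
  have key : ∀ A : Subgroup P, ⁅A, L⁆ ≤ M ↔
      A.map (QuotientGroup.mk' M) ≤ centralizer (L.map (QuotientGroup.mk' M)) := fun A => by
    rw [← commutator_eq_bot_iff_le_centralizer, ← map_commutator, map_eq_bot_iff,
      QuotientGroup.ker_mk']
  rw [key] at hH hK ⊢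
  rw [map_sup]
  exact sup_le hH hK

theorem commutator_comap_top_le {Q : Type*} [Group Q] {f : P →* Q}
    (hf : Function.Surjective f) {A B : Subgroup Q} (h : ⁅A, ⊤⁆ ≤ B) :
    ⁅A.comap f, ⊤⁆ ≤ B.comap f := by
  rwa [← map_le_iff_le_comap, map_commutator, map_comap_eq_self_of_surjective hf,
    map_top_of_surjective f hf]

end Subgroup

section ItComm

variable {P : Type*} [Group P]

theorem itComm_succ (X Y : Subgroup P) (n : ℕ) : itComm X Y (n + 1) = ⁅itComm X Y n, Y⁆ := rfl

theorem itComm_add (X Y : Subgroup P) (a b : ℕ) :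
    itComm (itComm X Y a) Y b = itComm X Y (a + b) := by
  induction b with
  | zero => rfl
  | succ b ih => rw [itComm_succ, ih, ← add_assoc, itComm_succ]

theorem itComm_mono {X X' : Subgroup P} (h : X ≤ X') (Y : Subgroup P) (n : ℕ) :
    itComm X Y n ≤ itComm X' Y n := by
  induction n with
  | zero => exact h
  | succ n ih => exact commutator_mono ih le_rfl

theorem itComm_antitone (X : Subgroup P) [X.Normal] : Antitone (itComm X ⊤) :=
  antitone_nat_of_succ_le fun _ => commutator_le_left _ _

theorem itComm_le_self (X : Subgroup P) [X.Normal] (n : ℕ) : itComm X ⊤ n ≤ X :=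
  itComm_antitone X n.zero_le

theorem itComm_succ_le_of_commutator_le {X R : Subgroup P} (h : ⁅X, ⊤⁆ ≤ R) (n : ℕ) :
    itComm X ⊤ (n + 1) ≤ itComm R ⊤ n := by
  rw [Nat.add_comm, ← itComm_add]
  exact itComm_mono h ⊤ n

theorem itComm_sup_le (A B : Subgroup P) [A.Normal] [B.Normal] (n : ℕ) :
    itComm (A ⊔ B) ⊤ n ≤ itComm A ⊤ n ⊔ itComm B ⊤ n := by
  induction n with
  | zero => rfl
  | succ n ih =>
    exact (commutator_mono ih le_rfl).trans (sup_commutator_le le_sup_left le_sup_right)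

theorem map_itComm {Q : Type*} [Group Q] {f : P →* Q} (hf : Function.Surjective f)
    (X : Subgroup P) (n : ℕ) : (itComm X ⊤ n).map f = itComm (X.map f) ⊤ n := by
  induction n with
  | zero => rfl
  | succ n ih => rw [itComm_succ, map_commutator, ih, map_top_of_surjective f hf, itComm_succ]

theorem comap_itComm_eq {Q : Type*} [Group Q] {f : P →* Q} (hf : Function.Surjective f)
    (N : Subgroup Q) (n : ℕ) : (itComm N ⊤ n).comap f = itComm (N.comap f) ⊤ n ⊔ f.ker := by
  rw [← comap_map_eq, map_itComm hf, map_comap_eq_self_of_surjective hf]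

end ItComm

section CentralChain

variable {P : Type*} [Group P]

theorem commutator_itComm_le_of_central_chain {E : ℤ → Subgroup P} [∀ n, (E n).Normal]
    (hE : ∀ n, ⁅E (n + 1), ⊤⁆ ≤ E n) (X : Subgroup P) (a : ℕ) (b : ℤ) :
    ⁅itComm X ⊤ a, E b⁆ ≤ E (b - a - 1) := by
  have hE' : ∀ n, ⁅E n, ⊤⁆ ≤ E (n - 1) := fun n => by simpa using hE (n - 1)
  induction a generalizing b with
  | zero =>
    rw [commutator_comm, Nat.cast_zero, sub_zero]
    exact (commutator_mono le_rfl le_top).trans (hE' b)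
  | succ a ih =>
    have hb : b - ↑(a + 1) - 1 = b - 1 - a - 1 := by push_cast; ring
    have hb' : b - ↑(a + 1) - 1 = b - a - 1 - 1 := by push_cast; ring
    refine commutator_commutator_le_of_rotate (H := ⊤) ?_ ?_
    · rw [commutator_comm ⊤, hb, commutator_comm _ (itComm X ⊤ a)]
      exact (commutator_mono le_rfl (hE' b)).trans (ih _)
    · rw [commutator_comm _ (itComm X ⊤ a), hb']
      exact (commutator_mono (ih b) le_rfl).trans (hE' _)

/-- Joins the series `Y` to the iterated commutators `[Y 0,_m P]` (placed at index `-m`), so that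
`commutator_itComm_le_of_central_chain` handles both at once. -/
def itCommExtend (Y : ℕ → Subgroup P) : ℤ → Subgroup P
  | .ofNat n => Y n
  | .negSucc m => itComm (Y 0) ⊤ (m + 1)

theorem itCommExtend_natCast (Y : ℕ → Subgroup P) (n : ℕ) : itCommExtend Y n = Y n := rfl

theorem itCommExtend_neg_natCast (Y : ℕ → Subgroup P) (m : ℕ) :
    itCommExtend Y (-m) = itComm (Y 0) ⊤ m := by
  cases m <;> rfl

instance itCommExtend_normal (Y : ℕ → Subgroup P) [∀ n, (Y n).Normal] (n : ℤ) :
    (itCommExtend Y n).Normal := by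
  cases n <;> unfold itCommExtend <;> infer_instance

theorem commutator_itCommExtend_succ_le {Y : ℕ → Subgroup P} (hY : ∀ n, ⁅Y (n + 1), ⊤⁆ ≤ Y n)
    (n : ℤ) : ⁅itCommExtend Y (n + 1), ⊤⁆ ≤ itCommExtend Y n := by
  cases n with
  | ofNat k => exact hY k
  | negSucc m =>
    rw [show Int.negSucc m + 1 = -(m : ℤ) by omega, itCommExtend_neg_natCast]
    exact le_rfl

theorem commutator_itComm_commutator_le (T : Subgroup P) [T.Normal] (j : ℕ) :
    ⁅itComm T ⊤ j, commutator P⁆ ≤ itComm T ⊤ (j + 2) := by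
  -- the chain `… ≤ [T,_1 P] ≤ T = T = …` with `X = ⊤`, as `commutator P = [⊤,_1 P]`
  have h := commutator_itComm_le_of_central_chain
    (commutator_itCommExtend_succ_le (Y := fun _ => T) fun _ => commutator_le_left T ⊤) ⊤ 1 (-j)
  rwa [show -(j : ℤ) - ↑(1 : ℕ) - 1 = -↑(j + 2) by push_cast; ring, itCommExtend_neg_natCast,
    itCommExtend_neg_natCast, commutator_comm] at h

end CentralChain

section Presentation

variable {F G : Type*} [Group F] [Group G] {π : F →* G}

theorem commutator_itComm_comap_upperCentralSeries_le (hπ : Function.Surjective π)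
    (N : Subgroup G) [N.Normal] (k j : ℕ) :
    ⁅itComm ((itComm N ⊤ k).comap π) ⊤ j, (Subgroup.upperCentralSeries G k).comap π⁆ ≤
      itComm π.ker ⊤ (j + 1) := by
  set Y : ℕ → Subgroup F := fun n => (Subgroup.upperCentralSeries G n).comap π
  have hY : ∀ n, ⁅Y (n + 1), ⊤⁆ ≤ Y n := fun n =>
    commutator_comap_top_le hπ (commutator_upperCentralSeries_top_le G n)
  have hY0 : Y 0 = π.ker := by
    simp only [Y, Subgroup.upperCentralSeries_zero, MonoidHom.comap_bot]
  have hS : ⁅itComm (N.comap π) ⊤ (k + j), Y k⁆ ≤ itComm π.ker ⊤ (j + 1) := by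
    have h := commutator_itComm_le_of_central_chain (commutator_itCommExtend_succ_le hY)
      (N.comap π) (k + j) k
    rwa [itCommExtend_natCast, show (k : ℤ) - ↑(k + j) - 1 = -↑(j + 1) by push_cast; ring,
      itCommExtend_neg_natCast, hY0] at h
  rw [comap_itComm_eq hπ]
  refine (commutator_mono ((itComm_sup_le _ _ j).trans_eq (by rw [itComm_add])) le_rfl).trans
    (sup_commutator_le hS (commutator_mono le_rfl le_top))

theorem ker_abelianization_of_comp_mk'_comp (hπ : Function.Surjective π) (Z : Subgroup G)
    [Z.Normal] :
    (Abelianization.of.comp ((QuotientGroup.mk' Z).comp π)).ker = commutator F ⊔ Z.comap π := by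
  rw [← MonoidHom.comap_ker, ← comap_comap, Abelianization.ker_of, _root_.commutator_def,
    ← map_top_of_surjective _ (QuotientGroup.mk'_surjective Z), ← map_commutator,
    QuotientGroup.comap_map_mk', ← map_top_of_surjective π hπ, ← map_commutator,
    ← comap_sup_eq π _ _ hπ, comap_map_eq, _root_.commutator_def, sup_comm _ π.ker, ← sup_assoc,
    sup_eq_left.mpr (π.ker_le_comap Z), sup_comm]

end Presentation

theorem commutator_itComm_sup_relCenter_le {F G : Type} [Group F] [Group G] {π : F →* G}
    (hπ : Function.Surjective π) (N : Subgroup G) [N.Normal] {k : ℕ}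
    (hk : ⁅itComm N ⊤ k, (⊤ : Subgroup G)⁆ = ⊥) (j : ℕ) :
    ⁅itComm ((itComm N ⊤ k).comap π) ⊤ j, commutator F ⊔ (relCenter N k).comap π⁆ ≤
      itComm π.ker ⊤ (j + 1) := by
  have hTR : ⁅(itComm N ⊤ k).comap π, ⊤⁆ ≤ π.ker := by
    simpa using commutator_comap_top_le hπ hk.le
  rw [commutator_comm]
  refine sup_commutator_le ?_ ?_
  · rw [commutator_comm]
    exact (commutator_itComm_commutator_le _ j).trans (itComm_succ_le_of_commutator_le hTR _)
  · rw [commutator_comm]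
    exact (commutator_mono le_rfl (comap_mono inf_le_right)).trans
      (commutator_itComm_comap_upperCentralSeries_le hπ N k j)

section RelAb

variable {F : Type*} [Group F] (T R : Subgroup F) [R.Normal]

/-- `[T,_j F]/[R,_j F]`, abelianized so that it is a commutative group without assuming
`⁅T, ⊤⁆ ≤ R`; under that assumption the quotient is already abelian (`card_relAb`). -/
abbrev RelAb (j : ℕ) : Type _ :=
  Abelianization (itComm T ⊤ j ⧸ (itComm R ⊤ j).subgroupOf (itComm T ⊤ j))

def toRelAb (j : ℕ) : itComm T ⊤ j →* RelAb T R j :=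
  Abelianization.of.comp (QuotientGroup.mk' _)

variable {T R}

theorem toRelAb_surjective (j : ℕ) : Function.Surjective (toRelAb T R j) := by
  rintro ⟨a⟩
  induction a using QuotientGroup.induction_on with | H x => exact ⟨x, rfl⟩

theorem RelAb.hom_ext {j : ℕ} {A : Type*} [Monoid A] {f g : RelAb T R j →* A}
    (h : ∀ x, f (toRelAb T R j x) = g (toRelAb T R j x)) : f = g :=
  Abelianization.hom_ext _ _ <| QuotientGroup.monoidHom_ext _ <| MonoidHom.ext h

theorem toRelAb_eq_one {j : ℕ} {x : itComm T ⊤ j} (hx : (x : F) ∈ itComm R ⊤ j) :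
    toRelAb T R j x = 1 := by
  rw [toRelAb, MonoidHom.comp_apply, QuotientGroup.mk'_apply,
    (QuotientGroup.eq_one_iff x).mpr hx, map_one]

theorem toRelAb_mk_mul {j : ℕ} {x y : F} (hx : x ∈ itComm T ⊤ j) (hy : y ∈ itComm T ⊤ j)
    (hxy : x * y ∈ itComm T ⊤ j) :
    toRelAb T R j ⟨x * y, hxy⟩ = toRelAb T R j ⟨x, hx⟩ * toRelAb T R j ⟨y, hy⟩ :=
  map_mul (toRelAb T R j) ⟨x, hx⟩ ⟨y, hy⟩

theorem toRelAb_mk_congr {j : ℕ} {x y : F} (h : x = y) (hx : x ∈ itComm T ⊤ j)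
    (hy : y ∈ itComm T ⊤ j) : toRelAb T R j ⟨x, hx⟩ = toRelAb T R j ⟨y, hy⟩ := by
  subst h; rfl

theorem card_relAb (hTR : ⁅T, ⊤⁆ ≤ R) (j : ℕ) :
    Nat.card (RelAb T R j) = (itComm R ⊤ j).relIndex (itComm T ⊤ j) := by
  have hcomm : commutator (itComm T ⊤ j ⧸ (itComm R ⊤ j).subgroupOf (itComm T ⊤ j)) = ⊥ := by
    rw [_root_.commutator_def, commutator_eq_bot_iff_le_centralizer]
    rintro a - b -
    induction a using QuotientGroup.induction_on with | H x =>
    induction b using QuotientGroup.induction_on with | H y =>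
    rw [← QuotientGroup.mk_mul, ← QuotientGroup.mk_mul, QuotientGroup.eq, mem_subgroupOf]
    have h : ⁅(x : F)⁻¹, (y : F)⁻¹⁆ ∈ itComm R ⊤ j :=
      itComm_succ_le_of_commutator_le hTR j (commutator_mem_commutator (inv_mem x.2) (mem_top _))
    convert h using 1
    simp only [commutatorElement_def, coe_mul, coe_inv]
    group
  exact (congrArg index hcomm).trans index_bot

theorem toRelAb_conj (hTR : ⁅T, ⊤⁆ ≤ R) {j : ℕ} (g : F) {x : F}
    (hx : x ∈ itComm T ⊤ (j + 1)) (hgx : g * x * g⁻¹ ∈ itComm T ⊤ (j + 1)) :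
    toRelAb T R (j + 1) ⟨g * x * g⁻¹, hgx⟩ = toRelAb T R (j + 1) ⟨x, hx⟩ := by
  have hc : ⁅g, x⁆ ∈ itComm R ⊤ (j + 1) := by
    rw [itComm_succ, commutator_comm]
    exact commutator_mem_commutator (mem_top g) (itComm_succ_le_of_commutator_le hTR j hx)
  have hc' : ⁅g, x⁆ ∈ itComm T ⊤ (j + 1) := by
    rw [commutatorElement_def]; exact mul_mem hgx (inv_mem hx)
  rw [toRelAb_mk_congr (by group) hgx (mul_mem hc' hx), toRelAb_mk_mul hc' hx,
    toRelAb_eq_one (x := ⟨_, hc'⟩) hc, one_mul]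

variable [T.Normal]

theorem toRelAb_commutator_mul_left (hTR : ⁅T, ⊤⁆ ≤ R) {j : ℕ} {x y : F} (f : F)
    (hxf : ⁅x, f⁆ ∈ itComm T ⊤ (j + 1)) (hyf : ⁅y, f⁆ ∈ itComm T ⊤ (j + 1))
    (hxyf : ⁅x * y, f⁆ ∈ itComm T ⊤ (j + 1)) :
    toRelAb T R (j + 1) ⟨⁅x * y, f⁆, hxyf⟩ =
      toRelAb T R (j + 1) ⟨⁅x, f⁆, hxf⟩ * toRelAb T R (j + 1) ⟨⁅y, f⁆, hyf⟩ := by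
  have hconj : x * ⁅y, f⁆ * x⁻¹ ∈ itComm T ⊤ (j + 1) := (inferInstance : Normal _).conj_mem _ hyf x
  -- `⁅x * y, f⁆ = (x * ⁅y, f⁆ * x⁻¹) * ⁅x, f⁆`
  rw [toRelAb_mk_congr (by simp only [commutatorElement_def]; group) hxyf (mul_mem hconj hxf),
    toRelAb_mk_mul hconj hxf, toRelAb_conj hTR x hyf, mul_comm]

theorem toRelAb_commutator_mul_right (hTR : ⁅T, ⊤⁆ ≤ R) {j : ℕ} {x : F} (f g : F)
    (hxf : ⁅x, f⁆ ∈ itComm T ⊤ (j + 1)) (hxg : ⁅x, g⁆ ∈ itComm T ⊤ (j + 1))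
    (hxfg : ⁅x, f * g⁆ ∈ itComm T ⊤ (j + 1)) :
    toRelAb T R (j + 1) ⟨⁅x, f * g⁆, hxfg⟩ =
      toRelAb T R (j + 1) ⟨⁅x, f⁆, hxf⟩ * toRelAb T R (j + 1) ⟨⁅x, g⁆, hxg⟩ := by
  have hconj : f * ⁅x, g⁆ * f⁻¹ ∈ itComm T ⊤ (j + 1) := (inferInstance : Normal _).conj_mem _ hxg f
  -- `⁅x, f * g⁆ = ⁅x, f⁆ * (f * ⁅x, g⁆ * f⁻¹)`
  rw [toRelAb_mk_congr (by simp only [commutatorElement_def]; group) hxfg (mul_mem hxf hconj),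
    toRelAb_mk_mul hxf hconj, toRelAb_conj hTR f hxg]

def commRelAb (hTR : ⁅T, ⊤⁆ ≤ R) (j : ℕ) (f : F) : RelAb T R j →* RelAb T R (j + 1) :=
  Abelianization.lift <| QuotientGroup.lift _
    (MonoidHom.mk'
      (fun x => toRelAb T R (j + 1) ⟨⁅(x : F), f⁆, commutator_mem_commutator x.2 (mem_top f)⟩)
      fun _ _ => toRelAb_commutator_mul_left hTR f _ _ _)
    (fun _ hx => toRelAb_eq_one (commutator_mem_commutator hx (mem_top f)))

def commRelAbHom (hTR : ⁅T, ⊤⁆ ≤ R) (j : ℕ) : F →* (RelAb T R j →* RelAb T R (j + 1)) :=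
  MonoidHom.mk' (commRelAb hTR j) fun f g => RelAb.hom_ext fun _ =>
    toRelAb_commutator_mul_right hTR f g _ _ _

open TensorProduct in
theorem exists_surjective_tensor_relAb_succ (hTR : ⁅T, ⊤⁆ ≤ R) {W : Type*} [CommGroup W]
    {μ : F →* W} (hμ : Function.Surjective μ) {j : ℕ}
    (hker : ⁅itComm T ⊤ j, μ.ker⁆ ≤ itComm R ⊤ (j + 1))
    {M : Type*} [AddCommGroup M] [Module ℤ M] {φ : M →ₗ[ℤ] Additive (RelAb T R j)}
    (hφ : Function.Surjective φ) :
    ∃ ψ : M ⊗[ℤ] Additive W →ₗ[ℤ] Additive (RelAb T R (j + 1)), Function.Surjective ψ := by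
  have hμker : μ.ker ≤ (commRelAbHom hTR j).ker := fun f hf =>
    RelAb.hom_ext fun x => toRelAb_eq_one (hker (commutator_mem_commutator x.2 hf))
  set B : W →* (RelAb T R j →* RelAb T R (j + 1)) :=
    μ.liftOfRightInverse _ (Function.rightInverse_surjInv hμ) ⟨_, hμker⟩
  have hB : ∀ f, B (μ f) = commRelAb hTR j f := μ.liftOfRightInverse_comp_apply _ _ _
  set β : Additive (RelAb T R j) →ₗ[ℤ] Additive W →ₗ[ℤ] Additive (RelAb T R (j + 1)) :=
    LinearMap.mk₂ ℤ (fun a w => Additive.ofMul (B w.toMul a.toMul))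
      (fun _ _ _ => by simp) (fun _ _ _ => by simp) (fun _ _ _ => by simp) (fun _ _ _ => by simp)
  set ψ := lift (β.comp φ)
  refine ⟨ψ, ?_⟩
  have hgen : itComm T ⊤ (j + 1) ≤ (ψ.toAddMonoidHom.range.toSubgroup'.comap
      (toRelAb T R (j + 1))).map (itComm T ⊤ (j + 1)).subtype := by
    refine commutator_le.mpr fun x hx f _ => ?_
    obtain ⟨m, hm⟩ := hφ (Additive.ofMul (toRelAb T R j ⟨x, hx⟩))
    have h : ψ (m ⊗ₜ Additive.ofMul (μ f)) = Additive.ofMul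
        (toRelAb T R (j + 1) ⟨⁅x, f⁆, commutator_mem_commutator hx (mem_top f)⟩) := by
      rw [lift.tmul, LinearMap.comp_apply, hm]
      exact congrArg Additive.ofMul (DFunLike.congr_fun (hB f) _)
    exact ⟨⟨⁅x, f⁆, commutator_mem_commutator hx (mem_top f)⟩, (AddSubgroup.mem_toSubgroup' _ _).mpr
      (AddMonoidHom.mem_range.mpr ⟨m ⊗ₜ Additive.ofMul (μ f), h⟩), rfl⟩
  intro a
  obtain ⟨x, hx⟩ := toRelAb_surjective (j + 1) a.toMul
  obtain ⟨y, hy, hyx⟩ := hgen x.2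
  obtain rfl : y = x := Subtype.ext hyx
  obtain ⟨z, hz⟩ := (AddSubgroup.mem_toSubgroup' _ _).mp (mem_comap.mp hy)
  exact ⟨z, hz.trans (congrArg Additive.ofMul hx)⟩

theorem exists_surjective_iterTensor_relAb (hTR : ⁅T, ⊤⁆ ≤ R) {W : Type*} [CommGroup W]
    {μ : F →* W} (hμ : Function.Surjective μ)
    (hker : ∀ j, ⁅itComm T ⊤ j, μ.ker⁆ ≤ itComm R ⊤ (j + 1))
    {M : ModuleCat ℤ} {φ : M →ₗ[ℤ] Additive (RelAb T R 0)} (hφ : Function.Surjective φ)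
    (j : ℕ) : ∃ ψ : iterTensor M (ModuleCat.of ℤ (Additive W)) j →ₗ[ℤ] Additive (RelAb T R j),
      Function.Surjective ψ := by
  induction j with
  | zero => exact ⟨φ, hφ⟩
  | succ j ih =>
    obtain ⟨ψ, hψ⟩ := ih
    exact exists_surjective_tensor_relAb_succ hTR hμ (hker j) hψ

end RelAb

theorem exists_surjective_abOf_relAb {F G : Type} [Group F] [Group G] {π : F →* G}
    (hπ : Function.Surjective π) (K : Subgroup G) :
    ∃ φ : AbOf K →ₗ[ℤ] Additive (RelAb (K.comap π) π.ker 0), Function.Surjective φ := by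
  set f : K.comap π →* K := (π.comp (K.comap π).subtype).codRestrict K fun x => x.2
  have hf : Function.Surjective f := fun k => by
    obtain ⟨x, hx⟩ := hπ k
    exact ⟨⟨x, show π x ∈ K from hx ▸ k.2⟩, Subtype.ext hx⟩
  have hker : f.ker ≤ (toRelAb (K.comap π) π.ker 0).ker := fun x hx =>
    toRelAb_eq_one (congrArg Subtype.val hx)
  set g : K →* RelAb (K.comap π) π.ker 0 :=
    f.liftOfRightInverse _ (Function.rightInverse_surjInv hf) ⟨_, hker⟩
  have hg : Function.Surjective g := fun a => by
    obtain ⟨x, rfl⟩ := toRelAb_surjective 0 a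
    exact ⟨f x, f.liftOfRightInverse_comp_apply _ _ _ x⟩
  refine ⟨(MonoidHom.toAdditive (Abelianization.lift g)).toIntLinearMap, fun a => ?_⟩
  obtain ⟨k, hk⟩ := hg a.toMul
  exact ⟨Additive.ofMul (Abelianization.of k), congrArg Additive.ofMul hk⟩

theorem relIndex_itComm_dvd_card_tensorPair {F G : Type} [Group F] [Group G] {π : F →* G}
    (hπ : Function.Surjective π) {K : Subgroup G} [K.Normal] (hK : ⁅K, (⊤ : Subgroup G)⁆ = ⊥)
    (Z : Subgroup G) [Z.Normal]
    (hKZ : ∀ j, ⁅itComm (K.comap π) ⊤ j, commutator F ⊔ Z.comap π⁆ ≤ itComm π.ker ⊤ (j + 1))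
    (c : ℕ) :
    (itComm π.ker ⊤ c).relIndex (itComm (K.comap π) ⊤ c) ∣
      Nat.card (tensorPair K (G ⧸ Z) c) := by
  have hTR : ⁅K.comap π, ⊤⁆ ≤ π.ker := by simpa using commutator_comap_top_le hπ hK.le
  have hμ : Function.Surjective (Abelianization.of.comp ((QuotientGroup.mk' Z).comp π)) :=
    (QuotientGroup.mk'_surjective _).comp ((QuotientGroup.mk'_surjective Z).comp hπ)
  obtain ⟨φ, hφ⟩ := exists_surjective_abOf_relAb hπ K
  obtain ⟨ψ, hψ⟩ := exists_surjective_iterTensor_relAb (M := ModuleCat.of ℤ (AbOf K)) hTR hμ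
    (fun j => (ker_abelianization_of_comp_mk'_comp hπ Z).symm ▸ hKZ j) hφ c
  rw [← card_relAb hTR]
  exact (AddSubgroup.card_dvd_of_surjective ψ.toAddMonoidHom hψ :)

theorem card_mul_card_mcPair_eq {F G : Type} [Group F] [Group G] {π : F →* G}
    (hπ : Function.Surjective π) (N : Subgroup G) [N.Normal] {K : Subgroup G}
    (hK : ⁅K, (⊤ : Subgroup G)⁆ = ⊥) {c : ℕ} (hc : 1 ≤ c) (hKN : K ≤ itComm N ⊤ c) :
    Nat.card K * Nat.card (McPair π N c) =
      Nat.card (McPairQuot π N K c) * (itComm π.ker ⊤ c).relIndex (itComm (K.comap π) ⊤ c) := by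
  set R := π.ker
  set T := K.comap π
  set L := itComm (N.comap π) ⊤ c
  have hRT : R ≤ T := π.ker_le_comap K
  have hTR : ⁅T, ⊤⁆ ≤ R := by simpa using commutator_comap_top_le hπ hK.le
  have hDR : itComm T ⊤ c ≤ R := by
    obtain ⟨c, rfl⟩ := Nat.exists_eq_add_of_le' hc
    exact (itComm_succ_le_of_commutator_le hTR c).trans (itComm_le_self R c)
  have hDL : itComm T ⊤ c ≤ L := itComm_mono (comap_mono (hKN.trans (itComm_le_self N c))) ⊤ c
  have hmap : (T ⊓ L).map π = K := by
    refine le_antisymm ((map_mono inf_le_left).trans (map_comap_le _ _)) fun k hk => ?_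
    have hk' : k ∈ (itComm (N.comap π) ⊤ c).map π := by
      rw [map_itComm hπ, map_comap_eq_self_of_surjective hπ]
      exact hKN hk
    obtain ⟨l, hl, rfl⟩ := hk'
    exact ⟨l, ⟨hk, hl⟩, rfl⟩
  have hcardK : Nat.card K = (R ⊓ L).relIndex (T ⊓ L) := by
    calc Nat.card K = (⊥ : Subgroup G).relIndex ((T ⊓ L).map π) := by
          rw [hmap, relIndex_bot_left]
      _ = R.relIndex (T ⊓ L) := by rw [← relIndex_comap, MonoidHom.comap_bot]
      _ = (R ⊓ L).relIndex (T ⊓ L) := by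
          rw [← inf_relIndex_right R, ← inf_assoc, inf_eq_left.mpr hRT]
  rw [hcardK]
  show (R ⊓ L).relIndex (T ⊓ L) * (itComm R ⊤ c).relIndex (R ⊓ L) =
    (itComm T ⊤ c).relIndex (T ⊓ L) * (itComm R ⊤ c).relIndex (itComm T ⊤ c)
  rw [← relIndex_mul_relIndex _ _ _ (itComm_mono hRT ⊤ c) (le_inf hDR hDL),
    ← relIndex_mul_relIndex _ _ _ (le_inf hDR hDL) (inf_le_inf_right L hRT)]
  ring

theorem card_multiplier_dvd_of_nilpotent_high_class_general {G : Type} [Group G]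
    {F : Type} [Group F] (π : F →* G) (hπ : Function.Surjective π)
    (N : Subgroup G) [N.Normal] (c t : ℕ) (hc : 1 ≤ c)
    (hnil : itComm N ⊤ t = ⊥) (ht : c + 1 ≤ t) :
    Nat.card (itComm N ⊤ (t - 1)) * Nat.card (McPair π N c) ∣
      Nat.card (McPairQuot π N (itComm N ⊤ (t - 1)) c) *
        Nat.card (tensorPair (itComm N ⊤ (t - 1)) (G ⧸ relCenter N (t - 1)) c) := by
  have hK : ⁅itComm N ⊤ (t - 1), (⊤ : Subgroup G)⁆ = ⊥ := by
    rw [← itComm_succ, Nat.sub_add_cancel (by omega : 1 ≤ t), hnil]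
  rw [card_mul_card_mcPair_eq hπ N hK hc (itComm_antitone N (by omega : c ≤ t - 1))]
  exact mul_dvd_mul_left _ (relIndex_itComm_dvd_card_tensorPair hπ hK _
    (commutator_itComm_sup_relCenter_le hπ N hK) c)

/-- Let `(G,N)` be a pair of finite groups which is nilpotent of class `t`
(`[N,_t G] = 1`, `[N,_{t−1} G] ≠ 1`) with `t ≥ c+1`, and `π : F ↠ G` a free presentation.
Then `|[N,_{t−1}G]| · |M^{(c)}(G,N)|` divides
`|M^{(c)}(G/[N,_{t−1}G], N/[N,_{t−1}G])| · |⊗^{c+1}([N,_{t−1}G], G/Z_{t−1}(N,G))|`. -/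
theorem card_multiplier_dvd_of_nilpotent_high_class {G : Type} [Group G] [Finite G]
    {F : Type} [Group F] [IsFreeGroup F] (π : F →* G) (hπ : Function.Surjective π)
    (N : Subgroup G) [N.Normal] (c t : ℕ) (hc : 1 ≤ c)
    (hnil : itComm N ⊤ t = ⊥) (hclass : itComm N ⊤ (t - 1) ≠ ⊥) (ht : c + 1 ≤ t) :
    Nat.card (itComm N ⊤ (t - 1)) * Nat.card (McPair π N c) ∣
      Nat.card (McPairQuot π N (itComm N ⊤ (t - 1)) c) *
        Nat.card (tensorPair (itComm N ⊤ (t - 1)) (G ⧸ relCenter N (t - 1)) c) :=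
  card_multiplier_dvd_of_nilpotent_high_class_general π hπ N c t hc hnil ht
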